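/- arXiv:1911.10405 — 2 statements merged into one kernel-verified Lean document; each statement's English description precedes it below -/
import Mathlib

section
/- (Statement (P1) in the proof of Proposition 4.2, type A_{n−1} instance.) Fix w ∈ S_n and μ ∈ ℤⁿ. There exists N ∈ ℕ such that for every λ = (λ_1,…,λ_n) ∈ ℤⁿ with λ_i − λ_{i+1} ≥ N for all 1 ≤ i ≤ n−1, the following holds: if u⁻ ∈ U⁻ satisfies π^{λ}·u⁻ ∈ U⁺_{w,π}·w·π^{λ−μ}·U⁺, then u⁻ ∈ U⁻ ∩ K. -/
/-!
For `j < i`, conjugating `π^λ u⁻ = u⁺ w π^{λ-μ} v⁺` by `π^λ` factors the lower unitriangular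
matrix `π^λ u⁻ π^{-λ}`, whose `(i, j)` entry is `p^{λ_i - λ_j} u⁻_{ij}`, as `P Q` with `P = u⁺ w`
integral and `Q` upper triangular with diagonal `p^{-μ}`. The minor of `P Q` on rows
`0, …, j - 1, i` and columns `0, …, j` is that entry; since `Q` is upper triangular it equals
`det P' · ∏_{s ≤ j} p^{-μ_s}` for a minor `P'` of `P`, and `|det P'| ≤ 1` by the ultrametric
inequality. Hence `|u⁻_{ij}| ≤ p^{λ_i - λ_j + Σ_{s ≤ j} μ_s} ≤ 1` as soon as every simple gap
`λ_k - λ_{k+1}` is at least `N = Σ_s |μ_s|`.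
-/

open Matrix Pointwise

noncomputable section

/-- `π^μ = diag(p^{μ_1},…,p^{μ_n})` as an element of `GL_n(ℚ_p)`. -/
def piPow (p : ℕ) [Fact p.Prime] (n : ℕ) (μ : Fin n → ℤ) : GL (Fin n) ℚ_[p] where
  val := diagonal fun i => (p : ℚ_[p]) ^ (μ i)
  inv := diagonal fun i => (p : ℚ_[p]) ^ (-μ i)
  val_inv := by
    have hp : (p : ℚ_[p]) ≠ 0 := Nat.cast_ne_zero.mpr (Fact.out : p.Prime).ne_zero
    rw [diagonal_mul_diagonal]
    have h : (fun i => (p : ℚ_[p]) ^ (μ i) * (p : ℚ_[p]) ^ (-μ i)) = fun _ => (1 : ℚ_[p]) := by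
      funext i; rw [← zpow_add₀ hp]; simp
    rw [h, diagonal_one]
  inv_val := by
    have hp : (p : ℚ_[p]) ≠ 0 := Nat.cast_ne_zero.mpr (Fact.out : p.Prime).ne_zero
    rw [diagonal_mul_diagonal]
    have h : (fun i => (p : ℚ_[p]) ^ (-μ i) * (p : ℚ_[p]) ^ (μ i)) = fun _ => (1 : ℚ_[p]) := by
      funext i; rw [← zpow_add₀ hp]; simp
    rw [h, diagonal_one]

/-- `K = GL_n(ℤ_p)`: matrices with entries in `ℤ_p` whose determinant is a unit of `ℤ_p`. -/
def Kgp (p : ℕ) [Fact p.Prime] (n : ℕ) : Set (GL (Fin n) ℚ_[p]) :=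
  {g | (∀ i j, ‖(g : Matrix (Fin n) (Fin n) ℚ_[p]) i j‖ ≤ 1) ∧
    ‖(g : Matrix (Fin n) (Fin n) ℚ_[p]).det‖ = 1}

/-- `U⁺`: upper triangular unipotent matrices. -/
def Uplus (p : ℕ) [Fact p.Prime] (n : ℕ) : Set (GL (Fin n) ℚ_[p]) :=
  {g | (∀ i, (g : Matrix (Fin n) (Fin n) ℚ_[p]) i i = 1) ∧
    ∀ i j : Fin n, j < i → (g : Matrix (Fin n) (Fin n) ℚ_[p]) i j = 0}

/-- `U⁻`: lower triangular unipotent matrices. -/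
def Uminus (p : ℕ) [Fact p.Prime] (n : ℕ) : Set (GL (Fin n) ℚ_[p]) :=
  {g | (∀ i, (g : Matrix (Fin n) (Fin n) ℚ_[p]) i i = 1) ∧
    ∀ i j : Fin n, i < j → (g : Matrix (Fin n) (Fin n) ℚ_[p]) i j = 0}

/-- The simple coroot `e_i − e_{i+1}` (0-indexed `i`), as a vector in `ℤⁿ`. -/
def simpleCoroot (n : ℕ) (i : ℕ) : Fin n → ℤ :=
  fun j => (if (j : ℕ) = i then 1 else 0) - (if (j : ℕ) = i + 1 then 1 else 0)

/-- Dominance order: `μ ≤ λ` iff `λ − μ` is a nonnegative integral combination of the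
simple coroots `e_i − e_{i+1}`, `1 ≤ i ≤ n−1`. -/
def domLE (n : ℕ) (μ lam : Fin n → ℤ) : Prop :=
  ∃ c : ℕ → ℕ,
    (fun j => lam j - μ j) = ∑ i ∈ Finset.range (n - 1), fun j => (c i : ℤ) * simpleCoroot n i j

/-- The permutation matrix of `w ∈ S_n` as an element of `GL_n(ℚ_p)`; the assignment
`w ↦ permGL p n w` is a group embedding of `S_n` into `GL_n(ℚ_p)`. -/
def permGL (p : ℕ) [Fact p.Prime] (n : ℕ) (w : Equiv.Perm (Fin n)) : GL (Fin n) ℚ_[p] where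
  val := (w⁻¹).permMatrix ℚ_[p]
  inv := w.permMatrix ℚ_[p]
  val_inv := by
    show ((w⁻¹).toPEquiv.toMatrix : Matrix (Fin n) (Fin n) ℚ_[p]) * w.toPEquiv.toMatrix = 1
    rw [← PEquiv.toMatrix_trans, ← Equiv.toPEquiv_trans]
    have h : Equiv.trans w⁻¹ w = Equiv.refl (Fin n) := by ext x; simp
    rw [h, Equiv.toPEquiv_refl, PEquiv.toMatrix_refl]
  inv_val := by
    show (w.toPEquiv.toMatrix : Matrix (Fin n) (Fin n) ℚ_[p]) * (w⁻¹).toPEquiv.toMatrix = 1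
    rw [← PEquiv.toMatrix_trans, ← Equiv.toPEquiv_trans]
    have h : Equiv.trans w w⁻¹ = Equiv.refl (Fin n) := by ext x; simp
    rw [h, Equiv.toPEquiv_refl, PEquiv.toMatrix_refl]

/-- Coxeter length of a permutation: the number of inversions. -/
def permLength (n : ℕ) (w : Equiv.Perm (Fin n)) : ℕ :=
  ((Finset.univ : Finset (Fin n × Fin n)).filter fun q => q.1 < q.2 ∧ w q.2 < w q.1).card

end

/-- `U⁺_{w,π}`: elements `u ∈ U⁺` all of whose entries of `u − 1` lie in `pℤ_p`
and with `w·u·w⁻¹ ∈ U⁻`. -/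
def UplusWpi (p : ℕ) [Fact p.Prime] (n : ℕ) (w : Equiv.Perm (Fin n)) :
    Set (GL (Fin n) ℚ_[p]) :=
  {u | u ∈ Uplus p n ∧
    (∀ i j : Fin n, ‖((u : Matrix (Fin n) (Fin n) ℚ_[p]) - 1) i j‖ ≤ (p : ℝ)⁻¹) ∧
    permGL p n w * u * (permGL p n w)⁻¹ ∈ Uminus p n}

theorem Finset.prod_zpow_eq_zpow_sum {ι G₀ : Type*} [CommGroupWithZero G₀] {a : G₀} (ha : a ≠ 0)
    (s : Finset ι) (f : ι → ℤ) : ∏ i ∈ s, a ^ f i = a ^ ∑ i ∈ s, f i := by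
  classical
  induction s using Finset.induction_on with
  | empty => simp
  | insert x s hx ih => rw [prod_insert hx, sum_insert hx, ih, zpow_add₀ ha]

namespace Matrix

theorem submatrix_mul_castLE_of_isUpperTriangular {R : Type*} [NonUnitalNonAssocSemiring R]
    {n m : ℕ} (h : m ≤ n) {P Q : Matrix (Fin n) (Fin n) R} (hQ : Q.IsUpperTriangular)
    (t : Fin m → Fin n) :
    (P * Q).submatrix t (Fin.castLE h) =
      P.submatrix t (Fin.castLE h) * Q.submatrix (Fin.castLE h) (Fin.castLE h) := by
  ext r s
  simp only [submatrix_apply, mul_apply]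
  refine (Fintype.sum_of_injective _ (Fin.castLE_injective h) _ _ (fun l hl => ?_)
    fun _ => rfl).symm
  have hsl : Fin.castLE h s < l := by
    by_contra! hls
    exact hl ⟨⟨l, lt_of_le_of_lt hls s.isLt⟩, rfl⟩
  exact mul_eq_zero_of_right _ (hQ hsl)

/-- `Function.update (Fin.castLE _) (Fin.last j) i` enumerates the rows `0, …, j - 1, i`. -/
theorem det_submatrix_update_last_castLE {R : Type*} [CommRing R] {n : ℕ}
    {L : Matrix (Fin n) (Fin n) R} (hL : L.IsLowerTriangular) (hL1 : ∀ i, L i i = 1)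
    (i j : Fin n) :
    (L.submatrix (Function.update (Fin.castLE j.isLt) (Fin.last j) i) (Fin.castLE j.isLt)).det =
      L i j := by
  have hrow : ∀ r, r ≠ Fin.last j → Function.update (Fin.castLE j.isLt) (Fin.last j) i r =
      Fin.castLE j.isLt r := fun r hr => Function.update_of_ne hr _ _
  rw [det_of_isLowerTriangular _ fun a b hab => ?_]
  · rw [Fintype.prod_eq_single (Fin.last j) fun r hr => by simp [hrow r hr, hL1]]
    simp only [submatrix_apply, Function.update_self]
    rfl
  · have hab : a < b := hab
    rw [submatrix_apply, hrow a (ne_top_of_lt hab)]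
    exact hL hab

theorem apply_eq_det_mul_prod_diag_of_isUpperTriangular {R : Type*} [CommRing R] {n : ℕ}
    {P Q : Matrix (Fin n) (Fin n) R} (hL : (P * Q).IsLowerTriangular)
    (hL1 : ∀ i, (P * Q) i i = 1) (hQ : Q.IsUpperTriangular) (i j : Fin n) :
    (P * Q) i j = (P.submatrix (Function.update (Fin.castLE j.isLt) (Fin.last j) i)
      (Fin.castLE j.isLt)).det * ∏ s ∈ Finset.Iic j, Q s s := by
  rw [← det_submatrix_update_last_castLE hL hL1 i j,
    submatrix_mul_castLE_of_isUpperTriangular _ hQ, det_mul,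
    det_of_isUpperTriangular (M := Q.submatrix (Fin.castLE j.isLt) (Fin.castLE j.isLt))
      fun a b hab => hQ hab]
  congr 1
  rw [← Finset.Iic_top, Fin.top_eq_last]
  exact (Fin.prod_Iic_castLE j.isLt (fun s => Q s s) _).symm

theorem norm_mul_apply_le_one {R ι : Type*} [NormedRing R] [IsUltrametricDist R] [Fintype ι]
    {A B : Matrix ι ι R} (hA : ∀ a b, ‖A a b‖ ≤ 1) (hB : ∀ a b, ‖B a b‖ ≤ 1) (a b : ι) :
    ‖(A * B) a b‖ ≤ 1 :=
  IsUltrametricDist.norm_sum_le_of_forall_le_of_nonneg zero_le_one fun r _ =>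
    (norm_mul_le _ _).trans (mul_le_one₀ (hA a r) (norm_nonneg _) (hB r b))

section Ultrametric

variable {K : Type*} [NormedField K] [IsUltrametricDist K]

theorem norm_det_le_one_of_forall_norm_apply_le_one {ι : Type*} [Fintype ι] [DecidableEq ι]
    {M : Matrix ι ι K} (hM : ∀ a b, ‖M a b‖ ≤ 1) : ‖M.det‖ ≤ 1 := by
  rw [det_apply]
  refine IsUltrametricDist.norm_sum_le_of_forall_le_of_nonneg zero_le_one fun σ _ => ?_
  rcases Int.units_eq_one_or (Equiv.Perm.sign σ) with hσ | hσ <;>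
  · simp only [hσ, Units.smul_def, one_smul, Units.val_neg, Units.val_one, neg_smul, norm_neg,
      norm_prod]
    exact Finset.prod_le_one (fun _ _ => norm_nonneg _) fun _ _ => hM _ _

theorem norm_apply_le_prod_norm_diag_of_eq_mul {n : ℕ} {L P Q : Matrix (Fin n) (Fin n) K}
    (hLPQ : L = P * Q) (hP : ∀ a b, ‖P a b‖ ≤ 1) (hL : L.IsLowerTriangular)
    (hL1 : ∀ i, L i i = 1) (hQ : Q.IsUpperTriangular) (i j : Fin n) :
    ‖L i j‖ ≤ ∏ s ∈ Finset.Iic j, ‖Q s s‖ := by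
  subst hLPQ
  rw [apply_eq_det_mul_prod_diag_of_isUpperTriangular hL hL1 hQ i j, norm_mul, norm_prod]
  exact mul_le_of_le_one_left (Finset.prod_nonneg fun _ _ => norm_nonneg _)
    (norm_det_le_one_of_forall_norm_apply_le_one fun a b => hP _ _)

end Ultrametric

end Matrix

theorem le_sub_of_lt_of_forall_succ_le_sub {n N : ℕ} {lam : Fin n → ℤ}
    (h : ∀ i j : Fin n, (j : ℕ) = (i : ℕ) + 1 → (N : ℤ) ≤ lam i - lam j) {i j : Fin n}
    (hij : i < j) : (N : ℤ) ≤ lam i - lam j := by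
  obtain ⟨j, hj⟩ := j
  have hij' : (i : ℕ) + 1 ≤ j := hij
  clear hij
  induction j, hij' using Nat.le_induction with
  | base => exact h i _ rfl
  | succ k hk ih =>
    have hik := ih (by omega)
    have hkk := h ⟨k, by omega⟩ ⟨k + 1, hj⟩ rfl
    omega

section Padic

variable {p : ℕ} [Fact p.Prime] {n : ℕ}

theorem piPow_mul_mul_inv_piPow_apply (a b : Fin n → ℤ) (g : GL (Fin n) ℚ_[p]) (l s : Fin n) :
    ((piPow p n a * g * (piPow p n b)⁻¹ : GL (Fin n) ℚ_[p]) : Matrix (Fin n) (Fin n) ℚ_[p]) l s =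
      (p : ℚ_[p]) ^ (a l - b s) * (g : Matrix (Fin n) (Fin n) ℚ_[p]) l s := by
  have hp : (p : ℚ_[p]) ≠ 0 := Nat.cast_ne_zero.mpr (Fact.out : p.Prime).ne_zero
  change (diagonal (fun i => (p : ℚ_[p]) ^ a i) * (g : Matrix (Fin n) (Fin n) ℚ_[p]) *
    diagonal (fun i => (p : ℚ_[p]) ^ (-b i)) : Matrix (Fin n) (Fin n) ℚ_[p]) l s = _
  rw [mul_diagonal, diagonal_mul, zpow_sub₀ hp, div_eq_mul_inv, ← _root_.zpow_neg]
  ring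

theorem norm_permGL_apply_le_one (w : Equiv.Perm (Fin n)) (a b : Fin n) :
    ‖(permGL p n w : Matrix (Fin n) (Fin n) ℚ_[p]) a b‖ ≤ 1 := by
  change ‖(w⁻¹).permMatrix ℚ_[p] a b‖ ≤ 1
  rw [Equiv.Perm.permMatrix, PEquiv.toMatrix_apply]
  split <;> simp

theorem norm_apply_le_one_of_mem_UplusWpi {w : Equiv.Perm (Fin n)} {u : GL (Fin n) ℚ_[p]}
    (hu : u ∈ UplusWpi p n w) (a b : Fin n) :
    ‖(u : Matrix (Fin n) (Fin n) ℚ_[p]) a b‖ ≤ 1 := by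
  have hp : (1 : ℝ) ≤ p := by exact_mod_cast (Fact.out : p.Prime).one_lt.le
  rw [← sub_add_cancel (u : Matrix (Fin n) (Fin n) ℚ_[p]) 1, Matrix.add_apply]
  refine (IsUltrametricDist.norm_add_le_max _ _).trans (max_le ?_ ?_)
  · exact (hu.2.1 a b).trans (inv_le_one_of_one_le₀ hp)
  · rw [one_apply]
    split <;> simp

theorem det_eq_one_of_mem_Uminus {u : GL (Fin n) ℚ_[p]} (hu : u ∈ Uminus p n) :
    (u : Matrix (Fin n) (Fin n) ℚ_[p]).det = 1 := by
  rw [det_of_isLowerTriangular _ fun a b hab => hu.2 a b hab]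
  simp [hu.1]

theorem norm_apply_le_zpow_of_piPow_mul_eq {w : Equiv.Perm (Fin n)} {lam μ : Fin n → ℤ}
    {um up vp : GL (Fin n) ℚ_[p]} (hum : um ∈ Uminus p n)
    (hup : ∀ a b, ‖(up : Matrix (Fin n) (Fin n) ℚ_[p]) a b‖ ≤ 1) (hvp : vp ∈ Uplus p n)
    (h : up * (permGL p n w * piPow p n (fun i => lam i - μ i)) * vp = piPow p n lam * um)
    (i j : Fin n) :
    ‖(um : Matrix (Fin n) (Fin n) ℚ_[p]) i j‖ ≤
      (p : ℝ) ^ (lam i - lam j + ∑ s ∈ Finset.Iic j, μ s) := by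
  have hp : (p : ℝ) ≠ 0 := Nat.cast_ne_zero.mpr (Fact.out : p.Prime).ne_zero
  set Q := piPow p n (fun i => lam i - μ i) * vp * (piPow p n lam)⁻¹
  have hconj : piPow p n lam * um * (piPow p n lam)⁻¹ = up * permGL p n w * Q := by
    rw [← h]
    simp only [Q, mul_assoc]
  have key := norm_apply_le_prod_norm_diag_of_eq_mul (congrArg Units.val hconj)
    (norm_mul_apply_le_one hup (norm_permGL_apply_le_one w))
    (fun a b hab => by rw [piPow_mul_mul_inv_piPow_apply, hum.2 a b hab, mul_zero])
    (fun a => by rw [piPow_mul_mul_inv_piPow_apply, hum.1, sub_self, zpow_zero, mul_one])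
    (fun a b hab => by rw [piPow_mul_mul_inv_piPow_apply, hvp.2 a b hab, mul_zero]) i j
  have hQdiag : ∀ s, ‖(Q : Matrix (Fin n) (Fin n) ℚ_[p]) s s‖ = (p : ℝ) ^ μ s := fun s => by
    rw [piPow_mul_mul_inv_piPow_apply, hvp.1, mul_one, Padic.norm_p_zpow]
    congr 1; ring
  rw [piPow_mul_mul_inv_piPow_apply, norm_mul, Padic.norm_p_zpow,
    Finset.prod_congr rfl fun s _ => hQdiag s, Finset.prod_zpow_eq_zpow_sum hp] at key
  calc ‖(um : Matrix (Fin n) (Fin n) ℚ_[p]) i j‖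
      = (p : ℝ) ^ (lam i - lam j) *
          ((p : ℝ) ^ (-(lam i - lam j)) * ‖(um : Matrix (Fin n) (Fin n) ℚ_[p]) i j‖) := by
        rw [← mul_assoc, ← zpow_add₀ hp, add_neg_cancel, zpow_zero, one_mul]
    _ ≤ (p : ℝ) ^ (lam i - lam j) * (p : ℝ) ^ (∑ s ∈ Finset.Iic j, μ s) := by gcongr
    _ = _ := (zpow_add₀ hp _ _).symm

end Padic

open Pointwise in
theorem statement_P1_general (p : ℕ) [Fact p.Prime] (n : ℕ)
    (w : Equiv.Perm (Fin n)) (μ : Fin n → ℤ) :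
    ∃ N : ℕ, ∀ lam : Fin n → ℤ,
      (∀ i j : Fin n, (j : ℕ) = (i : ℕ) + 1 → (N : ℤ) ≤ lam i - lam j) →
      ∀ um ∈ Uminus p n,
        piPow p n lam * um ∈
            UplusWpi p n w * {permGL p n w * piPow p n (fun i => lam i - μ i)} * Uplus p n →
          um ∈ Uminus p n ∩ Kgp p n := by
  refine ⟨∑ x, (μ x).natAbs, fun lam hlam um hum hmem =>
    ⟨hum, fun i j => ?_, by rw [det_eq_one_of_mem_Uminus hum, norm_one]⟩⟩
  obtain ⟨_, ⟨up, hup, _, rfl, rfl⟩, vp, hvp, h⟩ := hmem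
  rcases lt_trichotomy i j with hij | rfl | hji
  · simp [hum.2 i j hij]
  · simp [hum.1 i]
  have hμ : ∑ s ∈ Finset.Iic j, μ s ≤ ∑ x, |μ x| :=
    (Finset.sum_le_sum fun s _ => le_abs_self (μ s)).trans (Finset.sum_le_sum_of_subset_of_nonneg (Finset.subset_univ _) fun x _ _ => abs_nonneg _)
  have hgap := le_sub_of_lt_of_forall_succ_le_sub hlam hji
  push_cast at hgap
  refine (norm_apply_le_zpow_of_piPow_mul_eq hum (norm_apply_le_one_of_mem_UplusWpi hup) hvp
    h i j).trans (zpow_le_one_of_nonpos₀ ?_ (by linarith))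
  exact_mod_cast (Fact.out : p.Prime).one_lt.le

open Pointwise in
/-- **Statement (P1)** from the proof of Proposition 4.2 (type `A_{n−1}` instance): for fixed
`w, μ` and all sufficiently regular dominant `λ`, if `u⁻ ∈ U⁻` satisfies
`π^{λ}·u⁻ ∈ U⁺_{w,π}·w·π^{λ−μ}·U⁺`, then `u⁻ ∈ U⁻ ∩ K`. -/
theorem statement_P1 (p : ℕ) [Fact p.Prime] (n : ℕ) (hn : 2 ≤ n)
    (w : Equiv.Perm (Fin n)) (μ : Fin n → ℤ) :
    ∃ N : ℕ, ∀ lam : Fin n → ℤ,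
      (∀ i j : Fin n, (j : ℕ) = (i : ℕ) + 1 → (N : ℤ) ≤ lam i - lam j) →
      ∀ um ∈ Uminus p n,
        piPow p n lam * um ∈
            UplusWpi p n w * {permGL p n w * piPow p n (fun i => lam i - μ i)} * Uplus p n →
          um ∈ Uminus p n ∩ Kgp p n :=
  statement_P1_general p n w μ
end

section
/- (Decomposition used in the proof of Spherical Finiteness, Section 8.2, type A_{n−1} instance.) Let λ ∈ ℤⁿ be dominant (λ_1 ≥ ⋯ ≥ λ_n) and μ ∈ ℤⁿ. Then K·π^{ξ}·U⁻ ∩ K·π^{λ}·K = ∅ unless ξ ≤ λ, and consequently K·π^{λ}·K ∩ K·π^{μ}·U⁺ = ⋃_{ξ ∈ ℤⁿ, μ ≤ ξ ≤ λ} (K·π^{ξ}·U⁻ ∩ K·π^{μ}·U⁺ ∩ K·π^{λ}·K). -/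
open Matrix Pointwise

theorem Finset.sum_le_sum_of_isUpperSet {ι β : Type*} [LinearOrder ι] [AddCommMonoid β]
    [LinearOrder β] [IsOrderedAddMonoid β] {f : ι → β} (hf : Antitone f) {s t : Finset ι}
    (hs : IsUpperSet (s : Set ι)) (hcard : t.card = s.card) :
    ∑ i ∈ s, f i ≤ ∑ i ∈ t, f i := by
  classical
  rw [← sum_sdiff (inter_subset_left : s ∩ t ⊆ s), ← sum_sdiff (inter_subset_right : s ∩ t ⊆ t),
    sdiff_inter_self_left, sdiff_inter_self_right]
  refine add_le_add_left ?_ _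
  rcases (s \ t).eq_empty_or_nonempty with hempty | hne
  · have hempty' : t \ s = ∅ :=
      card_eq_zero.mp (by rw [← card_sdiff_comm hcard.symm, hempty, card_empty])
    rw [hempty, hempty']
  obtain ⟨j, hj, hmax⟩ := exists_max_image (s \ t) f hne
  calc ∑ i ∈ s \ t, f i ≤ (s \ t).card • f j := sum_le_card_nsmul _ _ _ hmax
    _ = (t \ s).card • f j := by rw [card_sdiff_comm hcard.symm]
    _ ≤ ∑ i ∈ t \ s, f i := card_nsmul_le_sum _ _ _ fun i hi => hf <| le_of_lt <| not_le.mp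
        fun hji => (mem_sdiff.mp hi).2 (hs hji (mem_sdiff.mp hj).1)

theorem Finset.sum_le_sum_comp_of_injective {ι β : Type*} [LinearOrder ι] [AddCommMonoid β]
    [LinearOrder β] [IsOrderedAddMonoid β] {f : ι → β} (hf : Antitone f) {s : Finset ι}
    (hs : IsUpperSet (s : Set ι)) {κ : s → ι} (hκ : Function.Injective κ) :
    ∑ i ∈ s, f i ≤ ∑ i, f (κ i) := by
  classical
  rw [← sum_image fun a _ b _ hab => hκ hab]
  exact sum_le_sum_of_isUpperSet hf hs (by rw [card_image_of_injective _ hκ, card_univ,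
    Fintype.card_coe])

theorem Set.mem_mul_singleton_mul {G : Type*} [Mul G] {s t : Set G} {a g : G} :
    g ∈ s * {a} * t ↔ ∃ x ∈ s, ∃ y ∈ t, g = x * a * y := by
  simp only [Set.mem_mul, Set.mem_singleton_iff]
  aesop

namespace Matrix

theorem det_mul_eq_sum_prod_mul_det_submatrix {R m n : Type*} [CommRing R] [Fintype m]
    [DecidableEq m] [Fintype n] (A : Matrix m n R) (B : Matrix n m R) :
    (A * B).det = ∑ κ : m → n, (∏ i, A i (κ i)) * (B.submatrix κ id).det := by
  have hrows : A * B = fun i => ∑ k, A i k • B k := by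
    ext i j; simp [mul_apply, Finset.sum_apply]
  rw [det, hrows, ← AlternatingMap.coe_multilinearMap, MultilinearMap.map_sum]
  simp_rw [MultilinearMap.map_smul_univ, smul_eq_mul]
  rfl

theorem one_add_vecMulVec_single_mul_apply {R n : Type*} [CommRing R] [Fintype n] [DecidableEq n]
    (w : n → R) (i₀ : n) (A : Matrix n n R) (i j : n) :
    ((1 + vecMulVec w (Pi.single i₀ 1)) * A) i j = A i j + w i * A i₀ j := by
  simp [add_mul, vecMulVec_mul, vecMulVec_apply]

theorem det_submatrix_diagonal_mul_of_isLowerTriangular {R n : Type*} [CommRing R] [Fintype n]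
    [DecidableEq n] [LinearOrder n] {u : Matrix n n R} (hu : u.IsLowerTriangular)
    (hdiag : ∀ i, u i i = 1) (d : n → R) (s : Finset n) :
    ((diagonal d * u).submatrix ((↑) : s → n) (↑)).det = ∏ i ∈ s, d i := by
  rw [det_of_isLowerTriangular _ fun i j hij => by simp [hu (show (i : n) < j from hij)]]
  simp [hdiag, Finset.prod_attach s d]

theorem submatrix_mul_of_isUpperTriangular {R n : Type*} [CommRing R] [Fintype n] [LinearOrder n]
    (X : Matrix n n R) {v : Matrix n n R} (hv : v.IsUpperTriangular) {s : Finset n}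
    (hs : IsLowerSet (s : Set n)) :
    (X * v).submatrix ((↑) : s → n) ((↑) : s → n) =
      X.submatrix ((↑) : s → n) ((↑) : s → n) * v.submatrix ((↑) : s → n) ((↑) : s → n) := by
  ext i j
  simp only [submatrix_apply, mul_apply]
  refine (Finset.sum_subset (Finset.subset_univ s) fun l _ hl => ?_).symm.trans
    (Finset.sum_subtype s (fun _ => Iff.rfl) fun l => X i l * v l j)
  rw [hv (not_le.mp fun hle => hl (hs hle j.2)), mul_zero]

def extendOne {R : Type*} [Zero R] [One R] {r : ℕ} (k : Matrix (Fin r) (Fin r) R) :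
    Matrix (Fin (r + 1)) (Fin (r + 1)) R :=
  reindex finSumFinEquiv finSumFinEquiv (fromBlocks k 0 0 1)

theorem extendOne_mul_apply_castSucc {R : Type*} [CommRing R] {r : ℕ}
    (k : Matrix (Fin r) (Fin r) R) (B : Matrix (Fin (r + 1)) (Fin (r + 1)) R) (i : Fin r)
    (j : Fin (r + 1)) : (extendOne k * B) i.castSucc j = ∑ l, k i l * B l.castSucc j := by
  simp [extendOne, mul_apply, Fin.sum_univ_castSucc]

section Normed

variable {𝕜 : Type*} [NormedField 𝕜]

def HasIntegralEntries {m n : Type*} (A : Matrix m n 𝕜) : Prop := ∀ i j, ‖A i j‖ ≤ 1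

def IsUnimodular {n : Type*} [Fintype n] [DecidableEq n] (A : Matrix n n 𝕜) : Prop :=
  A.HasIntegralEntries ∧ ‖A.det‖ = 1

section

variable {n : Type*} [Fintype n] [DecidableEq n]

theorem IsUnimodular.det_ne_zero {A : Matrix n n 𝕜} (hA : A.IsUnimodular) : A.det ≠ 0 :=
  norm_ne_zero_iff.mp (hA.2 ▸ one_ne_zero)

theorem isUnimodular_one : (1 : Matrix n n 𝕜).IsUnimodular :=
  ⟨fun i j => by rw [one_apply]; split_ifs <;> simp, by simp⟩

theorem isUnimodular_diagonal {d : n → 𝕜} (hd : ∀ i, ‖d i‖ = 1) : (diagonal d).IsUnimodular :=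
  ⟨fun i j => by rw [diagonal_apply]; split_ifs <;> simp [hd], by simp [norm_prod, hd]⟩

theorem isUnimodular_permMatrix (σ : Equiv.Perm n) : (σ.permMatrix 𝕜).IsUnimodular := by
  refine ⟨fun i j => ?_, ?_⟩
  · rw [Equiv.Perm.permMatrix, PEquiv.toMatrix_toPEquiv_eq, submatrix_apply, one_apply]
    split_ifs <;> simp
  · rcases Int.units_eq_one_or (Equiv.Perm.sign σ) with h | h <;> simp [det_permutation, h]

theorem IsUnimodular.extendOne {r : ℕ} {k : Matrix (Fin r) (Fin r) 𝕜} (hk : k.IsUnimodular) :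
    k.extendOne.IsUnimodular := by
  refine ⟨fun i j => ?_, by simpa [Matrix.extendOne] using hk.2⟩
  induction i using Fin.lastCases <;> induction j using Fin.lastCases <;>
    simp [Matrix.extendOne, hk.1 _ _]

end

variable [IsUltrametricDist 𝕜]

theorem HasIntegralEntries.mul {l m n : Type*} [Fintype m] {A : Matrix l m 𝕜} {B : Matrix m n 𝕜}
    (hA : A.HasIntegralEntries) (hB : B.HasIntegralEntries) : (A * B).HasIntegralEntries :=
  fun i j => IsUltrametricDist.norm_sum_le_of_forall_le_of_nonneg zero_le_one fun k _ => by
    rw [norm_mul]; exact mul_le_one₀ (hA i k) (norm_nonneg _) (hB k j)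

theorem norm_det_mul_le {m n : Type*} [Fintype m] [DecidableEq m] [Fintype n]
    {A : Matrix m n 𝕜} (hA : A.HasIntegralEntries) (B : Matrix n m 𝕜) {C : ℝ} (hC : 0 ≤ C)
    (hB : ∀ κ : m → n, Function.Injective κ → ‖(B.submatrix κ id).det‖ ≤ C) :
    ‖(A * B).det‖ ≤ C := by
  rw [det_mul_eq_sum_prod_mul_det_submatrix]
  refine IsUltrametricDist.norm_sum_le_of_forall_le_of_nonneg hC fun κ _ => ?_
  by_cases hκ : Function.Injective κ
  · rw [norm_mul, norm_prod]
    exact (mul_le_of_le_one_left (norm_nonneg _)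
      (Finset.prod_le_one (fun _ _ => norm_nonneg _) fun i _ => hA _ _)).trans (hB κ hκ)
  · obtain ⟨i, j, hij, hne⟩ := Function.not_injective_iff.mp hκ
    rw [det_zero_of_row_eq hne (by ext; simp [hij]), mul_zero, norm_zero]
    exact hC

section

variable {n : Type*} [Fintype n] [DecidableEq n]

theorem HasIntegralEntries.norm_det_le_one {A : Matrix n n 𝕜} (hA : A.HasIntegralEntries) :
    ‖A.det‖ ≤ 1 := by
  rw [det_apply']
  refine IsUltrametricDist.norm_sum_le_of_forall_le_of_nonneg zero_le_one fun σ _ => ?_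
  rw [norm_mul, norm_prod]
  exact mul_le_one₀ (IsUltrametricDist.norm_intCast_le_one _ _) (by positivity)
    (Finset.prod_le_one (fun _ _ => norm_nonneg _) fun i _ => hA _ _)

theorem IsUnimodular.mul {A B : Matrix n n 𝕜} (hA : A.IsUnimodular) (hB : B.IsUnimodular) :
    (A * B).IsUnimodular :=
  ⟨hA.1.mul hB.1, by rw [det_mul, norm_mul, hA.2, hB.2, one_mul]⟩

theorem IsUnimodular.inv {A : Matrix n n 𝕜} (hA : A.IsUnimodular) : A⁻¹.IsUnimodular := by
  refine ⟨fun i j => ?_, by rw [det_nonsing_inv, Ring.inverse_eq_inv', norm_inv, hA.2, inv_one]⟩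
  rw [inv_def, smul_apply, smul_eq_mul, Ring.inverse_eq_inv', norm_mul, norm_inv, hA.2, inv_one,
    one_mul, adjugate_apply]
  refine HasIntegralEntries.norm_det_le_one fun a b => ?_
  rw [updateRow_apply]
  split_ifs
  · rw [Pi.single_apply]; split_ifs <;> simp
  · exact hA.1 a b

theorem isUnimodular_one_add_vecMulVec_single {w : n → 𝕜} {i₀ : n} (hw : ∀ i, ‖w i‖ ≤ 1)
    (hw₀ : w i₀ = 0) : (1 + vecMulVec w (Pi.single i₀ 1)).IsUnimodular := by
  refine ⟨fun a b => (IsUltrametricDist.norm_add_le_max _ _).trans (max_le ?_ ?_), ?_⟩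
  · rw [one_apply]; split_ifs <;> simp
  · rw [vecMulVec_apply, norm_mul, Pi.single_apply]
    split_ifs <;> simp [hw a]
  · rw [vecMulVec_eq Unit, det_one_add_replicateCol_mul_replicateRow, single_dotProduct, hw₀]
    simp

/-- Eliminate with a pivot of largest norm, so that all multipliers have norm at most one. -/
theorem exists_isUnimodular_mul_apply_eq_zero (A : Matrix n n 𝕜) (i₁ j : n) :
    ∃ k : Matrix n n 𝕜, k.IsUnimodular ∧ ∀ i ≠ i₁, (k * A) i j = 0 := by
  obtain ⟨i₀, -, hmax⟩ :=
    Finset.exists_max_image Finset.univ (fun i => ‖A i j‖) ⟨i₁, Finset.mem_univ _⟩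
  by_cases hpiv : A i₀ j = 0
  · refine ⟨1, isUnimodular_one, fun i _ => ?_⟩
    simpa [hpiv] using hmax i (Finset.mem_univ _)
  set w : n → 𝕜 := fun i => if i = i₀ then 0 else -(A i j / A i₀ j)
  have hw : ∀ i, ‖w i‖ ≤ 1 := fun i => by
    simp only [w]
    split_ifs
    · simp
    · rw [norm_neg, norm_div]
      exact div_le_one_of_le₀ (hmax i (Finset.mem_univ _)) (norm_nonneg _)
  refine ⟨(Equiv.swap i₁ i₀).permMatrix 𝕜 * (1 + vecMulVec w (Pi.single i₀ 1)),
    (isUnimodular_permMatrix _).mul (isUnimodular_one_add_vecMulVec_single hw (if_pos rfl)),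
    fun i hi => ?_⟩
  have hσ : Equiv.swap i₁ i₀ i ≠ i₀ := by
    rwa [Ne, Equiv.swap_apply_eq_iff, Equiv.swap_apply_right]
  rw [Matrix.mul_assoc, Equiv.Perm.permMatrix, PEquiv.toMatrix_toPEquiv_mul, submatrix_apply, id,
    one_add_vecMulVec_single_mul_apply]
  simp [w, hσ, div_mul_cancel₀ _ hpiv]

end

theorem exists_isUnimodular_isLowerTriangular_mul :
    ∀ {r : ℕ} (A : Matrix (Fin r) (Fin r) 𝕜),
      ∃ k : Matrix (Fin r) (Fin r) 𝕜, k.IsUnimodular ∧ (k * A).IsLowerTriangular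
  | 0, _ => ⟨1, isUnimodular_one, fun i => i.elim0⟩
  | r + 1, A => by
    obtain ⟨k₀, hk₀, hcol⟩ := exists_isUnimodular_mul_apply_eq_zero A (Fin.last r) (Fin.last r)
    obtain ⟨k₁, hk₁, htri⟩ :=
      exists_isUnimodular_isLowerTriangular_mul ((k₀ * A).submatrix Fin.castSucc Fin.castSucc)
    refine ⟨extendOne k₁ * k₀, hk₁.extendOne.mul hk₀, fun i j (hij : i < j) => ?_⟩
    obtain ⟨i, rfl⟩ := Fin.exists_castSucc_eq.mpr (ne_of_lt (hij.trans_le (Fin.le_last j)))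
    rw [Matrix.mul_assoc, extendOne_mul_apply_castSucc]
    induction j using Fin.lastCases with
    | last => simp [hcol _ (Fin.castSucc_lt_last _).ne]
    | cast j => exact htri (Fin.castSucc_lt_castSucc_iff.mp hij)

section

variable {n : Type*} [Fintype n] [DecidableEq n]

theorem norm_det_submatrix_mul_diagonal_mul_le {h k : Matrix n n 𝕜} (hh : h.HasIntegralEntries)
    (hk : k.HasIntegralEntries) (d : n → 𝕜) (s : Finset n) {C : ℝ} (hC : 0 ≤ C)
    (hd : ∀ κ : s → n, Function.Injective κ → ‖∏ i, d (κ i)‖ ≤ C) :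
    ‖((h * diagonal d * k).submatrix ((↑) : s → n) (↑)).det‖ ≤ C := by
  rw [Matrix.mul_assoc, submatrix_mul _ _ _ id _ Function.bijective_id]
  refine norm_det_mul_le (fun i j => hh _ _) _ hC fun κ hκ => ?_
  have hfac : ((diagonal d * k).submatrix id ((↑) : s → n)).submatrix κ id
      = diagonal (d ∘ κ) * k.submatrix κ ((↑) : s → n) := by
    ext i j; simp [diagonal_mul]
  rw [hfac, det_mul, det_diagonal, norm_mul]
  exact (mul_le_of_le_one_right (by positivity)
    (HasIntegralEntries.norm_det_le_one fun i j => hk _ _)).trans (hd κ hκ)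

theorem norm_det_submatrix_mul_diagonal_mul_le_of_isUpperTriangular [LinearOrder n]
    {h v : Matrix n n 𝕜} (hh : h.HasIntegralEntries) (hv : v.IsUpperTriangular)
    (hdiag : ∀ i, v i i = 1) (d : n → 𝕜) {s : Finset n} (hs : IsLowerSet (s : Set n)) :
    ‖((h * diagonal d * v).submatrix ((↑) : s → n) (↑)).det‖ ≤ ‖∏ i ∈ s, d i‖ := by
  have hdiag_mul : (h * diagonal d).submatrix ((↑) : s → n) (↑)
      = h.submatrix (↑) (↑) * diagonal fun i : s => d i := by
    ext i j; simp [mul_diagonal]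
  rw [submatrix_mul_of_isUpperTriangular _ hv hs, hdiag_mul, det_mul, det_mul, det_diagonal,
    det_of_isUpperTriangular (M := v.submatrix ((↑) : s → n) ((↑) : s → n))
      fun i j hij => hv (show (j : n) < i from hij)]
  simp only [submatrix_apply, hdiag, Finset.prod_const_one, mul_one, norm_mul,
    Finset.prod_coe_sort s d]
  exact mul_le_of_le_one_left (by positivity)
    (HasIntegralEntries.norm_det_le_one fun i j => hh _ _)

end

end Normed

end Matrix

section PartialSums

variable {n : ℕ}

def partialSum (ν : Fin n → ℤ) (m : ℕ) : ℤ := ∑ i : Fin n with i.val < m, ν i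

theorem partialSum_zero (ν : Fin n → ℤ) : partialSum ν 0 = 0 := by simp [partialSum]

theorem partialSum_of_le (ν : Fin n → ℤ) {m : ℕ} (hm : n ≤ m) : partialSum ν m = ∑ i, ν i := by
  rw [partialSum, Finset.filter_true_of_mem fun i _ => i.2.trans_le hm]

theorem partialSum_succ (ν : Fin n → ℤ) (j : Fin n) :
    partialSum ν (j + 1) = partialSum ν j + ν j := by
  have : (Finset.univ.filter fun i : Fin n => (i : ℕ) < j + 1) =
      insert j (Finset.univ.filter fun i : Fin n => (i : ℕ) < j) := by
    ext i; simp [le_iff_eq_or_lt, Fin.val_inj]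
  rw [partialSum, this, Finset.sum_insert (by simp), add_comm, partialSum]

/-- The coefficient of `e_i − e_{i+1}` in `ξ − μ` is
`partialSum ξ (i + 1) - partialSum μ (i + 1)`. -/
theorem domLE_of_partialSum_le {μ ξ : Fin n → ℤ} (hle : ∀ m, partialSum μ m ≤ partialSum ξ m)
    (htot : ∑ i, μ i = ∑ i, ξ i) : domLE n μ ξ := by
  set D : ℕ → ℤ := fun m => partialSum ξ m - partialSum μ m
  have hD0 : D 0 = 0 := by simp [D, partialSum_zero]
  have hDn : D n = 0 := by simp [D, partialSum_of_le _ le_rfl, htot]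
  refine ⟨fun i => (D (i + 1)).toNat, funext fun j => ?_⟩
  have hc : ∀ i, (((D (i + 1)).toNat : ℕ) : ℤ) = D (i + 1) :=
    fun i => Int.toNat_of_nonneg (sub_nonneg.mpr (hle _))
  have hfirst : ∑ i ∈ Finset.range (n - 1), (if (j : ℕ) = i then D (i + 1) else 0) = D (j + 1) := by
    rw [Finset.sum_ite_eq]
    split_ifs with hj
    · rfl
    · rw [show (j : ℕ) + 1 = n by simp at hj; omega, hDn]
  have hsecond : ∑ i ∈ Finset.range (n - 1), (if (j : ℕ) = i + 1 then D (i + 1) else 0) = D j := by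
    rcases Nat.eq_zero_or_pos j with hj | hj
    · rw [hj, hD0]
      exact Finset.sum_eq_zero fun i _ => if_neg (by omega)
    · obtain ⟨t, ht⟩ := Nat.exists_eq_add_one_of_ne_zero hj.ne'
      simp_rw [ht, Nat.add_right_cancel_iff]
      rw [Finset.sum_ite_eq, if_pos (Finset.mem_range.mpr (by omega))]
  simp only [Finset.sum_apply, simpleCoroot, mul_sub, mul_ite, mul_one, mul_zero, hc,
    Finset.sum_sub_distrib, hfirst, hsecond]
  simp only [D, partialSum_succ]
  ring

end PartialSums

section Padic

variable {p : ℕ} [Fact p.Prime] {n : ℕ}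

theorem one_lt_prime_cast : 1 < (p : ℝ) := by exact_mod_cast (Fact.out : p.Prime).one_lt

theorem norm_prod_p_zpow {ι : Type*} (s : Finset ι) (f : ι → ℤ) :
    ‖∏ i ∈ s, (p : ℚ_[p]) ^ f i‖ = (p : ℝ) ^ (-∑ i ∈ s, f i) := by
  simp_rw [norm_prod, Padic.norm_p_zpow, ← Finset.sum_neg_distrib]
  exact Finset.prod_zpow_eq_zpow_sum (by exact_mod_cast (Fact.out : p.Prime).ne_zero) s _

theorem coe_piPow (ξ : Fin n → ℤ) :
    (piPow p n ξ : Matrix (Fin n) (Fin n) ℚ_[p]) = diagonal fun i => (p : ℚ_[p]) ^ ξ i := rfl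

theorem coe_piPow_inv (ξ : Fin n → ℤ) :
    ((piPow p n ξ)⁻¹ : GL (Fin n) ℚ_[p]) = (diagonal fun i => (p : ℚ_[p]) ^ (-ξ i) :
      Matrix (Fin n) (Fin n) ℚ_[p]) := rfl

theorem norm_det_piPow (ξ : Fin n → ℤ) :
    ‖(piPow p n ξ : Matrix (Fin n) (Fin n) ℚ_[p]).det‖ = (p : ℝ) ^ (-∑ i, ξ i) := by
  rw [coe_piPow, det_diagonal, norm_prod_p_zpow]

theorem mem_Kgp_iff {g : GL (Fin n) ℚ_[p]} :
    g ∈ Kgp p n ↔ (g : Matrix (Fin n) (Fin n) ℚ_[p]).IsUnimodular := Iff.rfl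

theorem mul_mem_Kgp {g h : GL (Fin n) ℚ_[p]} (hg : g ∈ Kgp p n) (hh : h ∈ Kgp p n) :
    g * h ∈ Kgp p n :=
  Matrix.IsUnimodular.mul hg hh

theorem inv_mem_Kgp {g : GL (Fin n) ℚ_[p]} (hg : g ∈ Kgp p n) : g⁻¹ ∈ Kgp p n := by
  rw [mem_Kgp_iff, Matrix.coe_units_inv]
  exact Matrix.IsUnimodular.inv hg

theorem det_eq_one_of_mem_Uplus {v : GL (Fin n) ℚ_[p]} (hv : v ∈ Uplus p n) :
    (v : Matrix (Fin n) (Fin n) ℚ_[p]).det = 1 := by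
  rw [det_of_isUpperTriangular hv.2]
  simp [hv.1]

theorem exists_mem_Kgp_mul_piPow_mul_Uminus (g : GL (Fin n) ℚ_[p]) :
    ∃ ξ, g ∈ Kgp p n * {piPow p n ξ} * Uminus p n := by
  obtain ⟨k, hk, htri⟩ :=
    Matrix.exists_isUnimodular_isLowerTriangular_mul (g : Matrix (Fin n) (Fin n) ℚ_[p])
  set L := k * (g : Matrix (Fin n) (Fin n) ℚ_[p])
  have hL : ∀ i, L i i ≠ 0 := by
    refine fun i => Finset.prod_ne_zero_iff.mp (?_ : ∏ i, L i i ≠ 0) i (Finset.mem_univ _)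
    rw [← det_of_isLowerTriangular _ htri, det_mul]
    exact mul_ne_zero hk.det_ne_zero ((isUnit_iff_isUnit_det _).mp g.isUnit).ne_zero
  set ξ : Fin n → ℤ := fun i => (L i i).valuation
  set κ := GeneralLinearGroup.mkOfDetNeZero k hk.det_ne_zero
  set δ := GeneralLinearGroup.mkOfDetNeZero (diagonal fun i => L i i)
    (by rw [det_diagonal]; exact Finset.prod_ne_zero_iff.mpr fun i _ => hL i)
  refine ⟨ξ, Set.mem_mul_singleton_mul.mpr
    ⟨κ⁻¹ * (δ * (piPow p n ξ)⁻¹), ?_, δ⁻¹ * κ * g, ?_, by group⟩⟩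
  · refine mul_mem_Kgp (inv_mem_Kgp hk) ?_
    rw [mem_Kgp_iff, Units.val_mul, coe_piPow_inv]
    show (diagonal (fun i => L i i) * diagonal fun i => (p : ℚ_[p]) ^ (-ξ i)).IsUnimodular
    rw [diagonal_mul_diagonal]
    refine isUnimodular_diagonal fun i => ?_
    rw [norm_mul, Padic.norm_eq_zpow_neg_valuation (hL i), Padic.norm_p_zpow, neg_neg,
      ← zpow_add₀ (by exact_mod_cast (Fact.out : p.Prime).ne_zero), neg_add_cancel, zpow_zero]
  · have hu : ((δ⁻¹ * κ * g : GL (Fin n) ℚ_[p]) : Matrix (Fin n) (Fin n) ℚ_[p])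
        = diagonal (fun i => (L i i)⁻¹) * L := by
      rw [Units.val_mul, Units.val_mul, coe_units_inv, Matrix.mul_assoc]
      show (diagonal _)⁻¹ * L = _
      rw [inv_eq_left_inv (B := diagonal fun i => (L i i)⁻¹)
        (by rw [diagonal_mul_diagonal]; simp [hL, ← diagonal_one])]
    refine ⟨fun i => ?_, fun i j hij => ?_⟩
    · simp [hu, diagonal_mul, hL]
    · simp [hu, diagonal_mul, htri hij]

theorem exists_piPow_mul_eq_of_mem {S : Set (GL (Fin n) ℚ_[p])} {ξ ν : Fin n → ℤ}
    {g : GL (Fin n) ℚ_[p]} (h₁ : g ∈ Kgp p n * {piPow p n ξ} * Uminus p n)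
    (h₂ : g ∈ Kgp p n * {piPow p n ν} * S) :
    ∃ u ∈ Uminus p n, ∃ h ∈ Kgp p n, ∃ s ∈ S, piPow p n ξ * u = h * piPow p n ν * s := by
  obtain ⟨k, hk, u, hu, rfl⟩ := Set.mem_mul_singleton_mul.mp h₁
  obtain ⟨k', hk', s, hs, heq⟩ := Set.mem_mul_singleton_mul.mp h₂
  refine ⟨u, hu, k⁻¹ * k', mul_mem_Kgp (inv_mem_Kgp hk) hk', s, hs, ?_⟩
  rw [mul_assoc k⁻¹, mul_assoc k⁻¹, mul_assoc k', ← mul_assoc k', ← heq]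
  group

theorem sum_eq_of_piPow_mul_eq {ξ ν : Fin n → ℤ} {u h s : GL (Fin n) ℚ_[p]}
    (hu : (u : Matrix (Fin n) (Fin n) ℚ_[p]).det = 1) (hh : h ∈ Kgp p n)
    (hs : ‖(s : Matrix (Fin n) (Fin n) ℚ_[p]).det‖ = 1)
    (heq : piPow p n ξ * u = h * piPow p n ν * s) : ∑ i, ξ i = ∑ i, ν i := by
  have hdet := congrArg (fun g : GL (Fin n) ℚ_[p] => ‖(g : Matrix (Fin n) (Fin n) ℚ_[p]).det‖) heq
  simp only [Units.val_mul, det_mul, norm_mul, norm_det_piPow, hu, mul_one, hh.2, hs,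
    one_mul] at hdet
  exact neg_inj.mp (zpow_right_injective₀ (zero_lt_one.trans one_lt_prime_cast)
    one_lt_prime_cast.ne' hdet)

theorem domLE_of_piPow_mul_eq_mul_piPow_mul_Kgp {ξ lam : Fin n → ℤ} (hlam : Antitone lam)
    {u h k : GL (Fin n) ℚ_[p]} (hu : u ∈ Uminus p n) (hh : h ∈ Kgp p n) (hk : k ∈ Kgp p n)
    (heq : piPow p n ξ * u = h * piPow p n lam * k) : domLE n ξ lam := by
  have hM := congrArg (fun g : GL (Fin n) ℚ_[p] => (g : Matrix (Fin n) (Fin n) ℚ_[p])) heq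
  simp only [Units.val_mul, coe_piPow] at hM
  have htot := sum_eq_of_piPow_mul_eq (det_eq_one_of_mem_Uminus hu) hh hk.2 heq
  refine domLE_of_partialSum_le (fun m => ?_) htot
  set s := Finset.univ.filter fun i : Fin n => ¬ i.val < m
  have hs : IsUpperSet (s : Set (Fin n)) := fun i j hij hi => by
    simp only [s, Finset.coe_filter, Finset.mem_univ, true_and, Set.mem_ofPred_eq] at hi ⊢
    exact fun hj => hi (lt_of_le_of_lt hij hj)
  have hbound := Matrix.norm_det_submatrix_mul_diagonal_mul_le hh.1 hk.1
    (fun i => (p : ℚ_[p]) ^ lam i) s (zpow_nonneg (Nat.cast_nonneg p) _)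
    fun κ hκ => by
      rw [norm_prod_p_zpow]
      exact zpow_le_zpow_right₀ one_lt_prime_cast.le
        (neg_le_neg (Finset.sum_le_sum_comp_of_injective hlam hs hκ))
  rw [← hM, Matrix.det_submatrix_diagonal_mul_of_isLowerTriangular hu.2 hu.1,
    norm_prod_p_zpow, zpow_le_zpow_iff_right₀ one_lt_prime_cast, neg_le_neg_iff] at hbound
  have hξ_split :=
    Finset.sum_filter_add_sum_filter_not Finset.univ (fun i : Fin n => i.val < m) ξ
  have hlam_split :=
    Finset.sum_filter_add_sum_filter_not Finset.univ (fun i : Fin n => i.val < m) lam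
  simp only [partialSum]
  linarith

theorem domLE_of_piPow_mul_eq_mul_piPow_mul_Uplus {ξ μ : Fin n → ℤ} {u h v : GL (Fin n) ℚ_[p]}
    (hu : u ∈ Uminus p n) (hh : h ∈ Kgp p n) (hv : v ∈ Uplus p n)
    (heq : piPow p n ξ * u = h * piPow p n μ * v) : domLE n μ ξ := by
  have hM := congrArg (fun g : GL (Fin n) ℚ_[p] => (g : Matrix (Fin n) (Fin n) ℚ_[p])) heq
  simp only [Units.val_mul, coe_piPow] at hM
  have htot := sum_eq_of_piPow_mul_eq (det_eq_one_of_mem_Uminus hu) hh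
    (by rw [det_eq_one_of_mem_Uplus hv, norm_one]) heq
  refine domLE_of_partialSum_le (fun m => ?_) htot.symm
  set s := Finset.univ.filter fun i : Fin n => i.val < m
  have hs : IsLowerSet (s : Set (Fin n)) := fun i j hij hi => by
    simp only [s, Finset.coe_filter, Finset.mem_univ, true_and, Set.mem_ofPred_eq] at hi ⊢
    exact lt_of_le_of_lt hij hi
  have hbound := Matrix.norm_det_submatrix_mul_diagonal_mul_le_of_isUpperTriangular hh.1 hv.2 hv.1
    (fun i => (p : ℚ_[p]) ^ μ i) hs
  rwa [← hM, Matrix.det_submatrix_diagonal_mul_of_isLowerTriangular hu.2 hu.1,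
    norm_prod_p_zpow, norm_prod_p_zpow, zpow_le_zpow_iff_right₀ one_lt_prime_cast,
    neg_le_neg_iff] at hbound

end Padic

open Pointwise in
theorem spherical_decomposition_general (p : ℕ) [Fact p.Prime] (n : ℕ)
    (lam μ : Fin n → ℤ)
    (hdom : ∀ i j : Fin n, (j : ℕ) = (i : ℕ) + 1 → lam j ≤ lam i) :
    (∀ ξ : Fin n → ℤ,
      ((Kgp p n * {piPow p n ξ} * Uminus p n) ∩
          (Kgp p n * {piPow p n lam} * Kgp p n)).Nonempty → domLE n ξ lam) ∧
    (Kgp p n * {piPow p n lam} * Kgp p n) ∩ (Kgp p n * {piPow p n μ} * Uplus p n) =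
      ⋃ ξ ∈ {ξ : Fin n → ℤ | domLE n μ ξ ∧ domLE n ξ lam},
        (Kgp p n * {piPow p n ξ} * Uminus p n) ∩ (Kgp p n * {piPow p n μ} * Uplus p n) ∩
          (Kgp p n * {piPow p n lam} * Kgp p n) := by
  have hanti : Antitone lam := by
    cases n with
    | zero => exact fun i => i.elim0
    | succ n => exact Fin.antitone_iff_succ_le.mpr fun i => hdom _ _ (by simp)
  have hbelow : ∀ ξ : Fin n → ℤ, ((Kgp p n * {piPow p n ξ} * Uminus p n) ∩
      (Kgp p n * {piPow p n lam} * Kgp p n)).Nonempty → domLE n ξ lam := by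
    rintro ξ ⟨g, hξ, hlam⟩
    obtain ⟨u, hu, h, hh, k, hk, heq⟩ := exists_piPow_mul_eq_of_mem hξ hlam
    exact domLE_of_piPow_mul_eq_mul_piPow_mul_Kgp hanti hu hh hk heq
  refine ⟨hbelow, Set.Subset.antisymm (fun g ⟨hlam, hμ⟩ => ?_) ?_⟩
  · obtain ⟨ξ, hξ⟩ := exists_mem_Kgp_mul_piPow_mul_Uminus g
    obtain ⟨u, hu, h, hh, v, hv, heq⟩ := exists_piPow_mul_eq_of_mem hξ hμ
    exact Set.mem_biUnion (x := ξ)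
      ⟨domLE_of_piPow_mul_eq_mul_piPow_mul_Uplus hu hh hv heq, hbelow ξ ⟨g, hξ, hlam⟩⟩
      ⟨⟨hξ, hμ⟩, hlam⟩
  · exact Set.iUnion₂_subset fun ξ _ g ⟨⟨_, hμ⟩, hlam⟩ => ⟨hlam, hμ⟩

open Pointwise in
/-- **Decomposition used in the proof of Spherical Finiteness** (Section 8.2, type `A_{n−1}`
instance): for `λ` dominant, `K·π^{ξ}·U⁻ ∩ K·π^{λ}·K = ∅` unless `ξ ≤ λ`, and
`K·π^{λ}·K ∩ K·π^{μ}·U⁺ = ⋃_{μ ≤ ξ ≤ λ} (K·π^{ξ}·U⁻ ∩ K·π^{μ}·U⁺ ∩ K·π^{λ}·K)`. -/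
theorem spherical_decomposition (p : ℕ) [Fact p.Prime] (n : ℕ) (hn : 2 ≤ n)
    (lam μ : Fin n → ℤ)
    (hdom : ∀ i j : Fin n, (j : ℕ) = (i : ℕ) + 1 → lam j ≤ lam i) :
    (∀ ξ : Fin n → ℤ,
      ((Kgp p n * {piPow p n ξ} * Uminus p n) ∩
          (Kgp p n * {piPow p n lam} * Kgp p n)).Nonempty → domLE n ξ lam) ∧
    (Kgp p n * {piPow p n lam} * Kgp p n) ∩ (Kgp p n * {piPow p n μ} * Uplus p n) =
      ⋃ ξ ∈ {ξ : Fin n → ℤ | domLE n μ ξ ∧ domLE n ξ lam},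
        (Kgp p n * {piPow p n ξ} * Uminus p n) ∩ (Kgp p n * {piPow p n μ} * Uplus p n) ∩
          (Kgp p n * {piPow p n lam} * Kgp p n) :=
  spherical_decomposition_general p n lam μ hdom
end
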